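/- arXiv:2405.07835 — 2 statements merged into one kernel-verified Lean document; each statement's English description precedes it below -/
import Mathlib

section
/- Cycle property: Let G be a finite connected simple graph with an injective edge-weight function w : E(G) → ℝ, and let C be a cycle in G. Then the unique edge of minimum weight among the edges of C does not belong to the unique maximum spanning tree of G. -/
open SimpleGraph

/-- The total edge weight of a graph `T` with respect to the weight function `w`. -/
noncomputable def graphWeight {V : Type*} (w : Sym2 V → ℝ) (T : SimpleGraph V) : ℝ :=
  ∑ᶠ e ∈ T.edgeSet, w e

/-- `T` is a maximum spanning tree of `G` with respect to the edge weights `w`. -/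
def IsMaxSpanningTree {V : Type*} (G : SimpleGraph V) (w : Sym2 V → ℝ)
    (T : SimpleGraph V) : Prop :=
  T ≤ G ∧ T.IsTree ∧
    ∀ T' : SimpleGraph V, T' ≤ G → T'.IsTree → graphWeight w T' ≤ graphWeight w T

/-!
Suppose the lightest edge `s(x, y)` of the cycle lay in a maximum spanning tree `T`. Deleting
it splits `T` into the side of `x` and the side of `y`; the rest of the cycle is a walk from `x`
to `y`, so one of its edges crosses between the sides. Exchanging the two edges gives a spanning
tree of strictly larger weight.
-/

namespace SimpleGraph

variable {V : Type*} {G H : SimpleGraph V} {u v x y a b : V}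

lemma Walk.IsTrail.exists_walk_notMem_edges {c : G.Walk u u} (hc : c.IsTrail)
    (he : s(x, y) ∈ c.edges) :
    ∃ p : G.Walk x y, s(x, y) ∉ p.edges ∧ ∀ f ∈ p.edges, f ∈ c.edges := by
  classical
  have hx := c.fst_mem_support_of_mem_edges he
  set c' := c.rotate x hx
  have hc'e : ∀ f, f ∈ c'.edges ↔ f ∈ c.edges := fun f => (c.rotate_edges x hx).mem_iff
  have hy : y ∈ c'.support := c'.snd_mem_support_of_mem_edges ((hc'e _).mpr he)
  have hdisj := (hc.rotate hx).disjoint_edges_takeUntil_dropUntil hy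
  by_cases htake : s(x, y) ∈ (c'.takeUntil y hy).edges
  · refine ⟨(c'.dropUntil y hy).reverse, ?_, fun f hf => ?_⟩
    · simpa using fun hdrop => hdisj htake hdrop
    · rw [Walk.edges_reverse, List.mem_reverse] at hf
      exact (hc'e f).mp (c'.edges_dropUntil_subset_edges hy hf)
  · exact ⟨c'.takeUntil y hy, htake,
      fun f hf => (hc'e f).mp (c'.edges_takeUntil_subset_edges hy hf)⟩

lemma Reachable.of_sup_edge (h : (H ⊔ edge x y).Reachable u v) :
    H.Reachable u v ∨ H.Reachable u x ∨ H.Reachable u y := by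
  obtain ⟨p⟩ := h
  induction p with
  | nil => exact Or.inl .rfl
  | cons hadj _ ih =>
    rcases hadj with hH | hedge
    · exact ih.imp hH.reachable.trans (Or.imp hH.reachable.trans hH.reachable.trans)
    · obtain ⟨⟨rfl, -⟩ | ⟨rfl, -⟩, -⟩ := (edge_adj ..).mp hedge
      exacts [Or.inr (Or.inl .rfl), Or.inr (Or.inr .rfl)]

theorem IsTree.deleteEdges_sup_edge {T : SimpleGraph V} (hT : T.IsTree)
    (ha : (T.deleteEdges {s(x, y)}).Reachable x a)
    (hb : ¬(T.deleteEdges {s(x, y)}).Reachable x b) :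
    (T.deleteEdges {s(x, y)} ⊔ edge a b).IsTree := by
  set T₀ := T.deleteEdges {s(x, y)}
  have hTle : T ≤ T₀ ⊔ edge x y := le_sdiff_sup
  have hside : ∀ u, T₀.Reachable u x ∨ T₀.Reachable u y := fun u =>
    (((hT.connected u x).mono hTle).of_sup_edge).elim Or.inl id
  have hby : T₀.Reachable b y := (hside b).resolve_left fun h => hb h.symm
  have hab : ¬T₀.Reachable a b := fun h => hb (ha.trans h)
  have hadj : (T₀ ⊔ edge a b).Adj a b :=
    Or.inr ((edge_adj ..).mpr ⟨Or.inl ⟨rfl, rfl⟩, fun h => hab (h ▸ .rfl)⟩)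
  have hreach : ∀ u, (T₀ ⊔ edge a b).Reachable u x := fun u => by
    rcases hside u with hux | huy
    · exact hux.mono le_sup_left
    · exact ((huy.trans hby.symm).mono le_sup_left).trans
        (hadj.symm.reachable.trans (ha.symm.mono le_sup_left))
  refine ⟨(connected_iff_exists_forall_reachable _).mpr ⟨x, fun u => (hreach u).symm⟩, ?_⟩
  exact (hT.isAcyclic.anti (deleteEdges_le _)).sup_edge_of_not_reachable hab

end SimpleGraph

section Weight

variable {V : Type*} [Finite V] (w : Sym2 V → ℝ) {H : SimpleGraph V}

lemma graphWeight_sup_edge {a b : V} (hab : a ≠ b) (h : s(a, b) ∉ H.edgeSet) :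
    graphWeight w (H ⊔ edge a b) = w s(a, b) + graphWeight w H := by
  rw [graphWeight, graphWeight, edgeSet_sup, edgeSet_edge_of_ne hab, Set.union_singleton,
    finsum_mem_insert _ h (Set.toFinite _)]

lemma graphWeight_eq_add_deleteEdges {e : Sym2 V} (he : e ∈ H.edgeSet) :
    graphWeight w H = w e + graphWeight w (H.deleteEdges {e}) := by
  rw [graphWeight, graphWeight, edgeSet_deleteEdges,
    ← finsum_mem_insert _ (fun h => h.2 rfl) (Set.toFinite _), Set.insert_sdiff_singleton,
    Set.insert_eq_of_mem he]

end Weight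

theorem cycle_property_general {V : Type*} [Fintype V] (G : SimpleGraph V)
    (w : Sym2 V → ℝ)
    (v : V) (c : G.Walk v v) (hc : c.IsCycle)
    (e : Sym2 V) (he : e ∈ c.edges)
    (hmin : ∀ f ∈ c.edges, f ≠ e → w e < w f)
    (T : SimpleGraph V) (hT : IsMaxSpanningTree G w T) :
    e ∉ T.edgeSet := by
  obtain ⟨hTG, hTtree, hTmax⟩ := hT
  intro heT
  cases e with | h x y
  have hsep : ¬(T.deleteEdges {s(x, y)}).Reachable x y :=
    isAcyclic_iff_forall_adj_isBridge.mp hTtree.isAcyclic heT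
  obtain ⟨p, hpe, hpc⟩ := hc.isTrail.exists_walk_notMem_edges he
  obtain ⟨d, hd, hda, hdb⟩ :=
    p.exists_boundary_dart {u | (T.deleteEdges {s(x, y)}).Reachable x u} .rfl hsep
  have hdp : d.edge ∈ p.edges := List.mem_map_of_mem hd
  have hde : d.edge ≠ s(x, y) := fun h => hpe (h ▸ hdp)
  have hdT₀ : d.edge ∉ (T.deleteEdges {s(x, y)}).edgeSet := fun h => hdb (hda.trans h.reachable)
  have hT' := hTtree.deleteEdges_sup_edge hda hdb
  have hT'G : T.deleteEdges {s(x, y)} ⊔ edge d.fst d.snd ≤ G :=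
    sup_le ((T.deleteEdges_le _).trans hTG) ((edge_le_iff G).mpr (.inr d.adj))
  have hle := hTmax _ hT'G hT'
  rw [graphWeight_sup_edge w d.adj.ne hdT₀, graphWeight_eq_add_deleteEdges w heT] at hle
  have hlt : w s(x, y) < w s(d.fst, d.snd) := hmin _ (hpc _ hdp) hde
  linarith

/-- Cycle property: for a finite connected simple graph `G` with injective edge
weights and a cycle `c` in `G`, the unique minimum-weight edge of `c` does not
belong to any (in particular not to the unique) maximum spanning tree of `G`. -/
theorem cycle_property {V : Type*} [Fintype V] (G : SimpleGraph V) (hG : G.Connected)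
    (w : Sym2 V → ℝ) (hw : Set.InjOn w G.edgeSet)
    (v : V) (c : G.Walk v v) (hc : c.IsCycle)
    (e : Sym2 V) (he : e ∈ c.edges)
    (hmin : ∀ f ∈ c.edges, f ≠ e → w e < w f)
    (T : SimpleGraph V) (hT : IsMaxSpanningTree G w T) :
    e ∉ T.edgeSet :=
  cycle_property_general G w v c hc e he hmin T hT
end

section
/- Triangle inequality for the permutation-matching distance: For all a, b, c : Fin n → ℝ, d(a, c) ≤ d(a, b) + d(b, c), where d(x, y) = sqrt(min over permutations σ of Fin n of ∑_i (x i − y (σ i))²). -/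
/-- The squared Wasserstein-type distance between two vectors `a b : Fin n → ℝ`:
the minimum over all permutations `σ` of `Fin n` of `∑ i, (a i - b (σ i))²`. -/
noncomputable def wsq (n : ℕ) (a b : Fin n → ℝ) : ℝ :=
  ⨅ σ : Equiv.Perm (Fin n), ∑ i, (a i - b (σ i)) ^ 2

/-- The Wasserstein-type distance `d(a,b) = sqrt (min_σ ∑ i (a i - b (σ i))²)`. -/
noncomputable def wdist (n : ℕ) (a b : Fin n → ℝ) : ℝ :=
  Real.sqrt (wsq n a b)

/-!
`wdist n a b` is the Euclidean distance from `a` to the closest rearrangement `b ∘ σ` of `b`.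
Choosing optimal matchings `σ` for `(a, b)` and `τ` for `(b, c)`, the composite matching
`τ ∘ σ` is admissible for `(a, c)`, and the Euclidean triangle inequality through `b ∘ σ`
bounds its cost, since `dist (b ∘ σ) (c ∘ τ ∘ σ) = dist b (c ∘ τ)`.
-/

open WithLp

lemma sqrt_sum_sq_sub_eq_dist {ι : Type*} [Fintype ι] (x y : ι → ℝ) :
    √(∑ i, (x i - y i) ^ 2) = dist (toLp 2 x) (toLp 2 y) := by
  simp [EuclideanSpace.dist_eq, Real.dist_eq, sq_abs]

lemma dist_toLp_comp_perm {ι : Type*} [Fintype ι] (x y : ι → ℝ) (σ : Equiv.Perm ι) :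
    dist (toLp 2 (x ∘ σ)) (toLp 2 (y ∘ σ)) = dist (toLp 2 x) (toLp 2 y) := by
  rw [← sqrt_sum_sq_sub_eq_dist, ← sqrt_sum_sq_sub_eq_dist]
  exact congrArg Real.sqrt (Equiv.sum_comp σ fun i => (x i - y i) ^ 2)

section

variable (n : ℕ) (a b : Fin n → ℝ)

lemma wsq_le_sum (σ : Equiv.Perm (Fin n)) : wsq n a b ≤ ∑ i, (a i - b (σ i)) ^ 2 :=
  ciInf_le ⟨0, by rintro _ ⟨τ, rfl⟩; positivity⟩ σ

lemma exists_perm_wsq_eq_sum :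
    ∃ σ : Equiv.Perm (Fin n), wsq n a b = ∑ i, (a i - b (σ i)) ^ 2 :=
  have ⟨σ, hσ⟩ := Finite.exists_min fun σ : Equiv.Perm (Fin n) => ∑ i, (a i - b (σ i)) ^ 2
  ⟨σ, (wsq_le_sum n a b σ).antisymm (le_ciInf hσ)⟩

lemma wdist_le_dist_comp (σ : Equiv.Perm (Fin n)) :
    wdist n a b ≤ dist (toLp 2 a) (toLp 2 (b ∘ σ)) :=
  sqrt_sum_sq_sub_eq_dist a (b ∘ σ) ▸ Real.sqrt_le_sqrt (wsq_le_sum n a b σ)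

lemma exists_perm_wdist_eq_dist :
    ∃ σ : Equiv.Perm (Fin n), wdist n a b = dist (toLp 2 a) (toLp 2 (b ∘ σ)) :=
  have ⟨σ, hσ⟩ := exists_perm_wsq_eq_sum n a b
  ⟨σ, by rw [wdist, hσ, ← sqrt_sum_sq_sub_eq_dist]; rfl⟩

end

/-- Triangle inequality for the permutation-matching distance:
`d(a, c) ≤ d(a, b) + d(b, c)` for all `a, b, c : Fin n → ℝ`. -/
theorem wdist_triangle (n : ℕ) (a b c : Fin n → ℝ) :
    wdist n a c ≤ wdist n a b + wdist n b c := by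
  obtain ⟨σ, hσ⟩ := exists_perm_wdist_eq_dist n a b
  obtain ⟨τ, hτ⟩ := exists_perm_wdist_eq_dist n b c
  calc wdist n a c ≤ dist (toLp 2 a) (toLp 2 ((c ∘ τ) ∘ σ)) :=
        wdist_le_dist_comp n a c (σ.trans τ)
    _ ≤ dist (toLp 2 a) (toLp 2 (b ∘ σ))
          + dist (toLp 2 (b ∘ σ)) (toLp 2 ((c ∘ τ) ∘ σ)) := dist_triangle _ _ _
    _ = wdist n a b + wdist n b c := by rw [hσ, hτ, dist_toLp_comp_perm]
end
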